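/- Let n, k be natural numbers, ε > 0, and suppose a convex body Δ ⊂ ℝⁿ satisfies Δ_{n+k+ε}^{-1} ⊆ Δ. Then the slice Δ_{x₁ ≥ n+k} = {x ∈ Δ : x₁ ≥ n+k} translated by −(n+k)e₁ is a convex body containing the origin and containing the inverted simplex of size ε′ for some ε′ > 0 (a positive multiple of ε); in particular, 0 ∈ Δ_{x₁ ≥ n+k} − (n+k)e₁. -/

import Mathlib

/-- The inverted standard simplex of size ξ in ℝⁿ. -/
def invSimplex (n : ℕ) (ξ : ℝ) : Set (Fin n → ℝ) :=
  convexHull ℝ {p | ∃ i : Fin (n + 1), p = fun j : Fin n => if (j : ℕ) < (i : ℕ) then ξ else 0}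

/-- The point t·e₁ in ℝⁿ. -/
def e1pt (n : ℕ) (t : ℝ) : Fin n → ℝ := fun j => if (j : ℕ) = 0 then t else 0

lemma aux_mem (n k : ℕ) (hn : 0 < n) (ε : ℝ) (hε : 0 < ε) (i : Fin (n + 1)) :
    ((fun j : Fin n => if (j : ℕ) < (i : ℕ) then ε else 0) + e1pt n ((n : ℝ) + k))
      ∈ invSimplex n ((n : ℝ) + k + ε) := by
  have ht0 : (0 : ℝ) ≤ (n : ℝ) + k := by positivity
  set t : ℝ := (n : ℝ) + k with htdef
  set ξ : ℝ := t + ε with hξdef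
  have hξ : 0 < ξ := by positivity
  set S : Set (Fin n → ℝ) :=
    {p | ∃ i : Fin (n + 1), p = fun j : Fin n => if (j : ℕ) < (i : ℕ) then ξ else 0} with hS
  have hv1 : (fun j : Fin n => if (j : ℕ) < ((⟨1, by omega⟩ : Fin (n + 1)) : ℕ) then ξ else 0)
      ∈ convexHull ℝ S := subset_convexHull ℝ S ⟨_, rfl⟩
  have hvi : (fun j : Fin n => if (j : ℕ) < (i : ℕ) then ξ else 0)
      ∈ convexHull ℝ S := subset_convexHull ℝ S ⟨i, rfl⟩
  have ha : (0 : ℝ) ≤ t / ξ := by positivity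
  have hb : (0 : ℝ) ≤ ε / ξ := by positivity
  have hab : t / ξ + ε / ξ = 1 := by field_simp; exact hξdef.symm
  have hcomb := (convex_convexHull ℝ S) hv1 hvi ha hb hab
  have heq : ((fun j : Fin n => if (j : ℕ) < (i : ℕ) then ε else 0) + e1pt n t)
      = (t / ξ) • (fun j : Fin n => if (j : ℕ) < ((⟨1, by omega⟩ : Fin (n + 1)) : ℕ) then ξ else 0)
        + (ε / ξ) • (fun j : Fin n => if (j : ℕ) < (i : ℕ) then ξ else 0) := by
    funext j
    simp only [Pi.add_apply, Pi.smul_apply, smul_eq_mul, e1pt]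
    have h01 : ((j : ℕ) < 1) ↔ ((j : ℕ) = 0) := by omega
    split_ifs with h1 h2 h3 h2 h3 <;> simp_all <;> field_simp <;> ring
  rw [invSimplex, heq]
  exact hcomb

theorem slice_translate_contains_origin (n k : ℕ) (hn : 0 < n) (ε : ℝ) (hε : 0 < ε)
    (Δ : Set (Fin n → ℝ)) (hconv : Convex ℝ Δ) (hcpt : IsCompact Δ)
    (hincl : invSimplex n ((n : ℝ) + k + ε) ⊆ Δ) :
    e1pt n ((n : ℝ) + k) ∈ Δ ∧
    Convex ℝ ((fun x => x - e1pt n ((n : ℝ) + k)) ''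
      {x ∈ Δ | (n : ℝ) + k ≤ x ⟨0, hn⟩}) ∧
    (0 : Fin n → ℝ) ∈ (fun x => x - e1pt n ((n : ℝ) + k)) ''
      {x ∈ Δ | (n : ℝ) + k ≤ x ⟨0, hn⟩} ∧
    ∃ ε' : ℝ, 0 < ε' ∧ invSimplex n ε' ⊆ (fun x => x - e1pt n ((n : ℝ) + k)) ''
      {x ∈ Δ | (n : ℝ) + k ≤ x ⟨0, hn⟩} := by
  set t : ℝ := (n : ℝ) + k with htdef
  set K : Set (Fin n → ℝ) := {x ∈ Δ | t ≤ x ⟨0, hn⟩} with hKdef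
  -- part 1
  have h1 : e1pt n t ∈ Δ := by
    have hm := hincl (aux_mem n k hn ε hε 0)
    have h0 : ((fun j : Fin n => if (j : ℕ) < ((0 : Fin (n + 1)) : ℕ) then ε else 0)
        + e1pt n t) = e1pt n t := by
      funext j; simp
    rwa [h0] at hm
  -- convexity of K
  have hK : Convex ℝ K := by
    have : K = Δ ∩ {x | t ≤ x ⟨0, hn⟩} := rfl
    rw [this]
    exact hconv.inter (convex_halfSpace_ge ⟨fun _ _ => rfl, fun _ _ => rfl⟩ t)
  -- part 2
  have h2 : Convex ℝ ((fun x => x - e1pt n t) '' K) := by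
    have himg : (fun x => x - e1pt n t) '' K = (fun x => -(e1pt n t) + x) '' K := by
      apply Set.image_congr'
      intro x; rw [sub_eq_neg_add]
    rw [himg]
    exact hK.translate _
  -- part 3
  have hcoord : e1pt n t ⟨0, hn⟩ = t := by simp [e1pt]
  have h3 : (0 : Fin n → ℝ) ∈ (fun x => x - e1pt n t) '' K :=
    ⟨e1pt n t, ⟨h1, by rw [hcoord]⟩, sub_self _⟩
  -- part 4
  refine ⟨h1, h2, h3, ε, hε, ?_⟩
  have hP : Convex ℝ ((fun z => z + e1pt n t) ⁻¹' K) := by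
    intro x hx y hy a b ha hb hab
    have hc : a • e1pt n t + b • e1pt n t = e1pt n t := by
      rw [← add_smul, hab, one_smul]
    have : (a • x + b • y) + e1pt n t = a • (x + e1pt n t) + b • (y + e1pt n t) := by
      calc (a • x + b • y) + e1pt n t
          = a • x + b • y + (a • e1pt n t + b • e1pt n t) := by rw [hc]
        _ = a • (x + e1pt n t) + b • (y + e1pt n t) := by
            rw [smul_add, smul_add]; abel
    simp only [Set.mem_preimage, this]
    exact hK hx hy ha hb hab
  have hsub : invSimplex n ε ⊆ (fun z => z + e1pt n t) ⁻¹' K := by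
    rw [invSimplex]
    apply convexHull_min _ hP
    rintro p ⟨i, rfl⟩
    have hcoord2 : t ≤ ((fun j : Fin n => if (j : ℕ) < (i : ℕ) then ε else 0)
        + e1pt n t) ⟨0, hn⟩ := by
      simp only [Pi.add_apply, e1pt]
      split_ifs <;> simp <;> linarith
    exact ⟨hincl (aux_mem n k hn ε hε i), hcoord2⟩
  intro y hy
  exact ⟨y + e1pt n t, hsub hy, by simp⟩
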